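/- Let (a_n : n ∈ ℕ) be a sequence of positive reals with a_n → ∞, (a_{n+1} − a_n) of bounded variation, and (1/√a_n) of bounded variation. Then the sequence (a_n(1/√a_n − 1/√a_{n+1})) is of bounded variation and converges to 0. -/

import Mathlib

/-!
Write `s n = √(a n)` and `c n = s (n + 1) - s n`. Then
`a n * (1 / s n - 1 / s (n + 1)) = c n * (1 - c n / s (n + 1))`, the second factor being
`s n / s (n + 1)`. Sequences of bounded variation form an algebra closed under shifts, and
`c n = (a (n + 1) - a n) / (s n + s (n + 1))`, where `1 / (s n + s (n + 1))` has bounded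
variation because `|Δ (1 / (x + y))| ≤ |Δ (1 / x)| + |Δ (1 / y)|` for positive `x`, `y`.
As `1 / s n → 0` and `a (n + 1) - a n` converges, `c n → 0`, hence the product tends to `0`.
-/

/-- A real sequence is of bounded variation (class 𝒟₁). -/
def BoundedVariation (x : ℕ → ℝ) : Prop :=
  Summable fun n => |x (n + 1) - x n|

open Filter Topology

namespace BoundedVariation

variable {x y : ℕ → ℝ}

lemma cauchySeq (hx : BoundedVariation x) : CauchySeq x :=
  cauchySeq_of_summable_dist <| hx.congr fun n => by rw [Real.dist_eq, abs_sub_comm]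

lemma exists_tendsto (hx : BoundedVariation x) : ∃ L, Tendsto x atTop (𝓝 L) :=
  cauchySeq_tendsto_of_complete hx.cauchySeq

lemma exists_abs_le (hx : BoundedVariation x) : ∃ C, ∀ n, |x n| ≤ C := by
  obtain ⟨C, hC⟩ := isBounded_iff_forall_norm_le.mp hx.cauchySeq.isBounded_range
  exact ⟨C, fun n => hC _ ⟨n, rfl⟩⟩

lemma congr (hx : BoundedVariation x) (h : ∀ n, x n = y n) : BoundedVariation y :=
  funext h ▸ hx

lemma const (c : ℝ) : BoundedVariation fun _ => c := by
  simp [BoundedVariation, summable_zero]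

lemma comp_succ (hx : BoundedVariation x) : BoundedVariation fun n => x (n + 1) :=
  (summable_nat_add_iff 1).mpr hx

lemma sub (hx : BoundedVariation x) (hy : BoundedVariation y) :
    BoundedVariation fun n => x n - y n :=
  .of_nonneg_of_le (fun _ => abs_nonneg _)
    (fun n => (congrArg abs (by ring)).trans_le (abs_sub (x (n + 1) - x n) (y (n + 1) - y n)))
    (hx.add hy)

lemma mul (hx : BoundedVariation x) (hy : BoundedVariation y) :
    BoundedVariation fun n => x n * y n := by
  obtain ⟨Cx, hCx⟩ := hx.exists_abs_le
  obtain ⟨Cy, hCy⟩ := hy.exists_abs_le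
  refine .of_nonneg_of_le (fun _ => abs_nonneg _) (fun n => ?_)
    ((hy.mul_left Cx).add (hx.mul_left Cy))
  calc |x (n + 1) * y (n + 1) - x n * y n|
      = |x (n + 1) * (y (n + 1) - y n) + y n * (x (n + 1) - x n)| := by ring_nf
    _ ≤ |x (n + 1)| * |y (n + 1) - y n| + |y n| * |x (n + 1) - x n| := by
      rw [← abs_mul, ← abs_mul]; exact abs_add_le _ _
    _ ≤ Cx * |y (n + 1) - y n| + Cy * |x (n + 1) - x n| := by
      gcongr
      · exact hCx _
      · exact hCy _

end BoundedVariation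

lemma abs_inv_add_sub_inv_add_le {x y x' y' : ℝ} (hx : 0 < x) (hy : 0 < y) (hx' : 0 < x')
    (hy' : 0 < y') : |(x' + y')⁻¹ - (x + y)⁻¹| ≤ |x'⁻¹ - x⁻¹| + |y'⁻¹ - y⁻¹| := by
  have hxy : x' * x ≤ (x' + y') * (x + y) := by nlinarith
  have hyy : y' * y ≤ (x' + y') * (x + y) := by nlinarith
  rw [inv_sub_inv (by positivity) (by positivity), inv_sub_inv hx'.ne' hx.ne',
    inv_sub_inv hy'.ne' hy.ne', abs_div, abs_div, abs_div,
    abs_of_pos (by positivity : 0 < (x' + y') * (x + y)),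
    abs_of_pos (by positivity : 0 < x' * x), abs_of_pos (by positivity : 0 < y' * y)]
  calc |x + y - (x' + y')| / ((x' + y') * (x + y))
      ≤ |x - x'| / ((x' + y') * (x + y)) + |y - y'| / ((x' + y') * (x + y)) := by
        rw [← add_div, show x + y - (x' + y') = (x - x') + (y - y') by ring]
        gcongr
        exact abs_add_le _ _
    _ ≤ |x - x'| / (x' * x) + |y - y'| / (y' * y) := by gcongr

lemma BoundedVariation.inv_add {x y : ℕ → ℝ} (hx : ∀ n, 0 < x n) (hy : ∀ n, 0 < y n)
    (hx' : BoundedVariation fun n => (x n)⁻¹) (hy' : BoundedVariation fun n => (y n)⁻¹) :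
    BoundedVariation fun n => (x n + y n)⁻¹ :=
  .of_nonneg_of_le (fun _ => abs_nonneg _)
    (fun n => abs_inv_add_sub_inv_add_le (hx n) (hy n) (hx (n + 1)) (hy (n + 1))) (hx'.add hy')

namespace Real

lemma sqrt_sub_sqrt_eq_div {x y : ℝ} (hx : 0 ≤ x) (hy : 0 < y) :
    √y - √x = (y - x) / (√x + √y) := by
  have : 0 < √x + √y := add_pos_of_nonneg_of_pos (sqrt_nonneg x) (sqrt_pos.2 hy)
  rw [eq_div_iff this.ne']
  nlinarith [sq_sqrt hx, sq_sqrt hy.le]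

lemma mul_one_div_sqrt_sub_one_div_sqrt {x y : ℝ} (hx : 0 < x) (hy : 0 < y) :
    x * (1 / √x - 1 / √y) = (√y - √x) * (1 - (√y - √x) * (√y)⁻¹) := by
  have hx' := sqrt_pos.2 hx
  have hy' := sqrt_pos.2 hy
  field_simp
  linear_combination (√x - √y) * mul_self_sqrt hx.le

end Real

open Real

section SqrtDifferences

variable {a : ℕ → ℝ}

lemma boundedVariation_sqrt_succ_sub_sqrt (hpos : ∀ n, 0 < a n)
    (hdiff : BoundedVariation fun n => a (n + 1) - a n)
    (hinv : BoundedVariation fun n => (√(a n))⁻¹) :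
    BoundedVariation fun n => √(a (n + 1)) - √(a n) := by
  have hv : BoundedVariation fun n => (√(a n) + √(a (n + 1)))⁻¹ :=
    .inv_add (fun n => sqrt_pos.2 (hpos n)) (fun n => sqrt_pos.2 (hpos (n + 1))) hinv
      hinv.comp_succ
  exact (hdiff.mul hv).congr fun n => by
    rw [sqrt_sub_sqrt_eq_div (hpos n).le (hpos (n + 1)), div_eq_mul_inv]

lemma tendsto_sqrt_succ_sub_sqrt (hpos : ∀ n, 0 < a n) (hinf : Tendsto a atTop atTop)
    (hdiff : BoundedVariation fun n => a (n + 1) - a n) :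
    Tendsto (fun n => √(a (n + 1)) - √(a n)) atTop (𝓝 0) := by
  obtain ⟨L, hL⟩ := hdiff.exists_tendsto
  have hs : Tendsto (fun n => √(a n)) atTop atTop := tendsto_sqrt_atTop.comp hinf
  have hv : Tendsto (fun n => (√(a n) + √(a (n + 1)))⁻¹) atTop (𝓝 0) :=
    tendsto_inv_atTop_zero.comp (hs.atTop_add_atTop (hs.comp (tendsto_add_atTop_nat 1)))
  refine (mul_zero L ▸ hL.mul hv).congr fun n => ?_
  rw [sqrt_sub_sqrt_eq_div (hpos n).le (hpos (n + 1)), div_eq_mul_inv]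

end SqrtDifferences

theorem inv_sqrt_scaled_diff_bounded_variation
    (a : ℕ → ℝ) (hpos : ∀ n, 0 < a n)
    (hinf : Filter.Tendsto a Filter.atTop Filter.atTop)
    (hdiff : BoundedVariation fun n => a (n + 1) - a n)
    (hinv : BoundedVariation fun n => 1 / Real.sqrt (a n)) :
    BoundedVariation (fun n => a n * (1 / Real.sqrt (a n) - 1 / Real.sqrt (a (n + 1)))) ∧
      Filter.Tendsto (fun n => a n * (1 / Real.sqrt (a n) - 1 / Real.sqrt (a (n + 1))))
        Filter.atTop (nhds 0) := by
  have hu : BoundedVariation fun n => (√(a n))⁻¹ := by simpa only [one_div] using hinv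
  have hu0 : Tendsto (fun n => (√(a n))⁻¹) atTop (𝓝 0) :=
    tendsto_inv_atTop_zero.comp (tendsto_sqrt_atTop.comp hinf)
  have hc := boundedVariation_sqrt_succ_sub_sqrt hpos hdiff hu
  have hc0 := tendsto_sqrt_succ_sub_sqrt hpos hinf hdiff
  have hkey := fun n => mul_one_div_sqrt_sub_one_div_sqrt (hpos n) (hpos (n + 1))
  simp only [hkey]
  refine ⟨hc.mul ((BoundedVariation.const 1).sub (hc.mul hu.comp_succ)), ?_⟩
  simpa using hc0.mul (tendsto_const_nhds.sub (hc0.mul (hu0.comp (tendsto_add_atTop_nat 1))))
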